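/- arXiv:1904.05715 — 3 statements merged into one kernel-verified Lean document; each statement's English description precedes it below -/
import Mathlib

section
/- Let 0 = x₀ < x₁ < ... < x_s and let segment widths be w_k = x_k − x_{k−1}. Suppose nonnegative reals v₁,…,v_s and binaries u₁,…,u_{s−1} ∈ {0,1} satisfy: u₁·w₁ ≤ v₁ ≤ w₁; u_k·w_k ≤ v_k ≤ u_{k−1}·w_k for 2 ≤ k ≤ s−1; and 0 ≤ v_s ≤ u_{s−1}·w_s. Then there exists an index j ∈ {1,…,s} such that v_i = w_i for all i < j and v_i = 0 for all i > j, i.e., v_k = min(x_k, max(Σ_i v_i, x_{k−1})) − x_{k−1} for all k. -/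
open Finset

/-- The binary ordering constraints (18) force the segment variables to fill
segments consecutively: segments are indexed `k = 0, …, s-1` with widths
`w k = x (k+1) - x k`, and binaries `u 0, …, u (s-2)`. Then there is a
segment index `j` (1-based) such that all earlier segments are full, all later
ones are empty, i.e. `v k = min (x (k+1)) (max (Σ v) (x k)) - x k`. -/
theorem milp_constraints_force_segment_filling (s : ℕ) (hs : 1 ≤ s)
    (x : ℕ → ℝ) (hx0 : x 0 = 0) (hmono : ∀ k < s, x k < x (k + 1))
    (v u : ℕ → ℝ)
    (hvnonneg : ∀ k < s, 0 ≤ v k)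
    (hbin : ∀ k, k + 1 < s → u k = 0 ∨ u k = 1)
    (hlow : ∀ k, k + 1 < s → u k * (x (k + 1) - x k) ≤ v k)
    (hub0 : v 0 ≤ x 1 - x 0)
    (hub : ∀ k, 0 < k → k < s → v k ≤ u (k - 1) * (x (k + 1) - x k)) :
    (∃ j, 1 ≤ j ∧ j ≤ s ∧
        (∀ i, i + 1 < j → v i = x (i + 1) - x i) ∧
        (∀ i, j ≤ i → i < s → v i = 0)) ∧
      ∀ k < s,
        v k = min (x (k + 1)) (max (∑ i ∈ range s, v i) (x k)) - x k := by
  classical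
  -- monotonicity of x up to s
  have xmono : ∀ a b : ℕ, a ≤ b → b ≤ s → x a ≤ x b := by
    intro a b hab hbs
    induction b with
    | zero => interval_cases a; exact le_refl _
    | succ n ih =>
      rcases Nat.eq_or_lt_of_le hab with h | h
      · subst h; exact le_refl _
      · have ha : a ≤ n := Nat.lt_succ_iff.mp h
        exact le_trans (ih ha (by omega)) (le_of_lt (hmono n (by omega)))
  have hQ : ∃ t, ¬(t + 1 < s ∧ u t = 1) := ⟨s - 1, fun h => absurd h.1 (by omega)⟩
  set m := Nat.find hQ with hmdef
  have hm1 : ¬(m + 1 < s ∧ u m = 1) := Nat.find_spec hQ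
  have hm2 : ∀ t < m, t + 1 < s ∧ u t = 1 := by
    intro t ht
    have := Nat.find_min hQ ht
    tauto
  have hmle : m ≤ s - 1 := Nat.find_le (fun h => absurd h.1 (by omega))
  have hms : m < s := by omega
  -- all binaries at or after m vanish
  have hu0 : ∀ t, m ≤ t → t + 1 < s → u t = 0 := by
    intro t
    induction t using Nat.strong_induction_on with
    | _ t ih =>
      intro hmt hts
      rcases hbin t hts with h0 | h1
      · exact h0
      exfalso
      have hwt : 0 < x (t + 1) - x t := by have := hmono t (by omega); linarith
      have hvt : x (t + 1) - x t ≤ v t := by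
        have := hlow t hts; rw [h1, one_mul] at this; linarith
      rcases Nat.eq_or_lt_of_le hmt with he | hl
      · exact hm1 ⟨by omega, by rw [he]; exact h1⟩
      · have h1' : u (t - 1) = 0 := ih (t - 1) (by omega) (by omega) (by omega)
        have := hub t (by omega) (by omega)
        rw [h1', zero_mul] at this
        linarith
  have hfull : ∀ i, i + 1 < m + 1 → v i = x (i + 1) - x i := by
    intro i hi
    obtain ⟨his, hui⟩ := hm2 i (by omega)
    have hlo := hlow i his
    rw [hui, one_mul] at hlo
    have hup : v i ≤ x (i + 1) - x i := by
      rcases Nat.eq_zero_or_pos i with h0 | hpos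
      · subst h0; exact hub0
      · have h := hub i hpos (by omega)
        obtain ⟨_, hui1⟩ := hm2 (i - 1) (by omega)
        rw [hui1, one_mul] at h; exact h
    linarith
  have hzero : ∀ i, m + 1 ≤ i → i < s → v i = 0 := by
    intro i hmi his
    have h1 : u (i - 1) = 0 := hu0 (i - 1) (by omega) (by omega)
    have h := hub i (by omega) his
    rw [h1, zero_mul] at h
    have := hvnonneg i his
    linarith
  have hvm_nn : 0 ≤ v m := hvnonneg m hms
  have hvm_ub : v m ≤ x (m + 1) - x m := by
    rcases Nat.eq_zero_or_pos m with h0 | hpos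
    · rw [h0]; exact hub0
    · rcases Nat.lt_or_ge (m + 1) s with hlt | hge
      · have h := hub m hpos hms
        obtain ⟨_, hum1⟩ := hm2 (m - 1) (by omega)
        rw [hum1, one_mul] at h; exact h
      · have h := hub m hpos hms
        obtain ⟨_, hum1⟩ := hm2 (m - 1) (by omega)
        rw [hum1, one_mul] at h; exact h
  set S := ∑ i ∈ range s, v i with hS
  have hSval : S = x m + v m := by
    have h1 : ∑ i ∈ range (m + 1), v i = S := by
      rw [hS]
      refine Finset.sum_subset (Finset.range_subset_range.mpr (by omega)) ?_
      intro i hi hni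
      simp only [Finset.mem_range] at hi hni
      exact hzero i (by omega) hi
    rw [← h1, Finset.sum_range_succ]
    have h2 : ∑ i ∈ range m, v i = ∑ i ∈ range m, (x (i + 1) - x i) := by
      refine Finset.sum_congr rfl ?_
      intro i hi
      simp only [Finset.mem_range] at hi
      exact hfull i (by omega)
    rw [h2, Finset.sum_range_sub (f := x), hx0]
    ring
  have hSlo : x m ≤ S := by linarith
  have hShi : S ≤ x (m + 1) := by linarith
  refine ⟨⟨m + 1, by omega, by omega, hfull, hzero⟩, ?_⟩
  intro k hk
  rcases lt_trichotomy k m with h | h | h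
  · have hx1 : x (k + 1) ≤ x m := xmono (k + 1) m (by omega) (by omega)
    have hmax : x (k + 1) ≤ max S (x k) := le_max_of_le_left (by linarith)
    rw [min_eq_left hmax, hfull k (by omega)]
  · subst h
    rw [max_eq_left hSlo, min_eq_right hShi]
    linarith
  · have hx1 : x (m + 1) ≤ x k := xmono (m + 1) k (by omega) (by omega)
    have hkk : x k ≤ x (k + 1) := le_of_lt (hmono k hk)
    rw [max_eq_right (by linarith), min_eq_right hkk, hzero k (by omega) hk]
    ring
end

section
/- Combining the previous two results: with Ṽ = (v^{in}, v^{out}, v^{in}_1,…,v^{in}_s, v^{out}_1,…,v^{out}_s) (taking B = 2 primary branches, one input and one output), the system {Z̃_g·Ṽ = 0, W̃_g·Ṽ = 0} holds if and only if v^{in} = Σ_k v^{in}_k, v^{out} = Σ_k v^{out}_k, and v^{out}_k = η_k·v^{in}_k for all k; consequently v^{out} = Σ_k η_k·v^{in}_k. -/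
open Matrix Finset

namespace PWLSISO

variable {ι κ R : Type*} [Ring R]

/-- The paper's `Z̃_g = H̃_g Ã_g = [0 | diag η | -I]`, columns ordered as in `Ṽ`: primary branches,
segment inputs, segment outputs. -/
def conversionMatrix [DecidableEq ι] (η : ι → R) : Matrix ι (κ ⊕ (ι ⊕ ι)) R :=
  fromCols 0 (fromCols (diagonal η) (-1))

/-- The paper's `W̃_g = [-Ā_g, W_g]` for one input and one output branch (`Ā_g = I₂`). -/
def branchMatrix : Matrix (Fin 2) (Fin 2 ⊕ (ι ⊕ ι)) R :=
  fromCols (-1) (fromCols (of ![1, 0]) (of ![0, 1]))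

variable [Fintype ι]

theorem conversionMatrix_mulVec_eq_zero_iff [Fintype κ] [DecidableEq ι] (η : ι → R)
    (V : κ ⊕ (ι ⊕ ι) → R) :
    conversionMatrix η *ᵥ V = 0 ↔ ∀ k, V (.inr (.inr k)) = η k * V (.inr (.inl k)) := by
  simp [conversionMatrix, funext_iff, mulVec_diagonal, neg_mulVec, add_neg_eq_zero, eq_comm]

theorem branchMatrix_mulVec_eq_zero_iff (V : Fin 2 ⊕ (ι ⊕ ι) → R) :
    branchMatrix *ᵥ V = 0 ↔
      V (.inl 0) = ∑ k, V (.inr (.inl k)) ∧ V (.inl 1) = ∑ k, V (.inr (.inr k)) := by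
  simp [branchMatrix, funext_iff, Fin.forall_fin_two, one_dotProduct, neg_add_eq_zero]

end PWLSISO

open PWLSISO

/-- Combined model of a piecewise-linearized SISO converter with two primary
branches (one input, one output). With `Ṽ = (v^in, v^out, v^in_1, …, v^in_s,
v^out_1, …, v^out_s)`, the system `{Z̃_g Ṽ = 0, W̃_g Ṽ = 0}` holds iff the
splitter/concentrator equations `v^in = Σ v^in_k`, `v^out = Σ v^out_k` and the
per-segment conversions `v^out_k = η_k v^in_k` hold; consequently the system
implies `v^out = Σ_k η_k v^in_k`. -/
theorem pwl_siso_combined_model (s : ℕ) (η : Fin s → ℝ)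
    (Z : Matrix (Fin s) (Fin 2 ⊕ (Fin s ⊕ Fin s)) ℝ)
    (hZ : ∀ p q, Z p q =
      match q with
      | Sum.inl _ => 0
      | Sum.inr (Sum.inl k) => if p = k then η p else 0
      | Sum.inr (Sum.inr k) => if p = k then -1 else 0)
    (Wt : Matrix (Fin 2) (Fin 2 ⊕ (Fin s ⊕ Fin s)) ℝ)
    (hWt : ∀ i q, Wt i q =
      match i, q with
      | ⟨0, _⟩, Sum.inl ⟨0, _⟩ => -1
      | ⟨1, _⟩, Sum.inl ⟨1, _⟩ => -1
      | ⟨0, _⟩, Sum.inr (Sum.inl _) => 1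
      | ⟨1, _⟩, Sum.inr (Sum.inr _) => 1
      | _, _ => 0)
    (Vt : Fin 2 ⊕ (Fin s ⊕ Fin s) → ℝ) :
    ((Z.mulVec Vt = 0 ∧ Wt.mulVec Vt = 0) ↔
      (Vt (Sum.inl 0) = ∑ k : Fin s, Vt (Sum.inr (Sum.inl k)) ∧
        Vt (Sum.inl 1) = ∑ k : Fin s, Vt (Sum.inr (Sum.inr k)) ∧
        ∀ k : Fin s,
          Vt (Sum.inr (Sum.inr k)) = η k * Vt (Sum.inr (Sum.inl k)))) ∧
    (Z.mulVec Vt = 0 ∧ Wt.mulVec Vt = 0 →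
      Vt (Sum.inl 1) = ∑ k : Fin s, η k * Vt (Sum.inr (Sum.inl k))) := by
  obtain rfl : Z = conversionMatrix η := by
    ext p (_ | k | k) <;> simp [hZ, conversionMatrix, diagonal_apply, one_apply, neg_ite]
  obtain rfl : Wt = branchMatrix := by
    ext i (j | k | k) <;> fin_cases i <;> (try fin_cases j) <;> rw [hWt] <;>
      first | rfl | simp [branchMatrix]
  have model :=
    (conversionMatrix_mulVec_eq_zero_iff η Vt).and (branchMatrix_mulVec_eq_zero_iff Vt)
  rw [and_comm (a := ∀ _, _), and_assoc] at model
  refine ⟨model, fun h => ?_⟩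
  obtain ⟨-, h_out, h_conv⟩ := model.mp h
  exact h_out.trans (sum_congr rfl fun k _ => h_conv k)
end

section
/- Suppose g : [0, X] → ℝ with g(0)=0, breakpoints 0 = x₀ < ... < x_s = X, secant slopes η_k, and segment widths w_k. Then the set {(v, y) : ∃ v_1,…,v_s and binaries u_1,…,u_{s−1} satisfying the ordering constraints u_1 w_1 ≤ v_1 ≤ w_1, u_k w_k ≤ v_k ≤ u_{k−1} w_k (2≤k≤s−1), 0 ≤ v_s ≤ u_{s−1} w_s, with v = Σ v_k and y = Σ η_k v_k} equals the graph {(v, L(v)) : v ∈ [0, X]} of the piecewise-linear interpolant L of g. -/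
open Finset

/-- Full correctness of the MILP piecewise-linearization encoding: the feasible
(input, output) pairs of the mixed-integer constraint system are exactly the
points on the graph of the piecewise-linear interpolant `L` of `g`. Segments
are indexed `k = 0, …, s-1`, with widths `w k = x (k+1) - x k` and secant
slopes `η k`. -/
theorem milp_feasible_set_eq_pwl_graph (s : ℕ) (hs : 1 ≤ s) (X : ℝ)
    (x : ℕ → ℝ) (hx0 : x 0 = 0) (hxs : x s = X)
    (hmono : ∀ k < s, x k < x (k + 1))
    (g : ℝ → ℝ) (hg0 : g 0 = 0)
    (η : ℕ → ℝ)
    (hη : ∀ k < s, η k = (g (x (k + 1)) - g (x k)) / (x (k + 1) - x k))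
    (L : ℝ → ℝ)
    (hL : ∀ t, L t = ∑ k ∈ range s, η k * (min (x (k + 1)) (max t (x k)) - x k)) :
    {p : ℝ × ℝ | ∃ v u : ℕ → ℝ,
        (∀ k < s, 0 ≤ v k) ∧
        (∀ k, k + 1 < s → u k = 0 ∨ u k = 1) ∧
        (∀ k, k + 1 < s → u k * (x (k + 1) - x k) ≤ v k) ∧
        v 0 ≤ x 1 - x 0 ∧
        (∀ k, 0 < k → k < s → v k ≤ u (k - 1) * (x (k + 1) - x k)) ∧
        p.1 = ∑ k ∈ range s, v k ∧
        p.2 = ∑ k ∈ range s, η k * v k} =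
      {p : ℝ × ℝ | ∃ t ∈ Set.Icc (0 : ℝ) X, p = (t, L t)} := by
  have hxle : ∀ i j : ℕ, i ≤ j → j ≤ s → x i ≤ x j := by
    intro i j hij hjs
    induction j with
    | zero => rw [Nat.le_zero.mp hij]
    | succ n ih =>
      rcases eq_or_lt_of_le hij with h | h
      · rw [h]
      · exact le_trans (ih (Nat.lt_succ_iff.mp h) (by omega))
          (le_of_lt (hmono n (by omega)))
  ext p
  simp only [Set.mem_setOf_eq]
  constructor
  · rintro ⟨v, u, hv0, hub, hlb, hv0ub, hvub, hp1, hp2⟩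
    have hQex : ∃ k, (k + 1 < s → u k = 0) := ⟨s, by omega⟩
    set j := Nat.find hQex with hj
    have hQj : j + 1 < s → u j = 0 := Nat.find_spec hQex
    have hlt : ∀ k < j, k + 1 < s ∧ u k = 1 := by
      intro k hk
      have h := Nat.find_min hQex hk
      push_neg at h
      exact ⟨h.1, (hub k h.1).resolve_left h.2⟩
    have hjs : j < s := by
      by_contra h
      push_neg at h
      have := (hlt (s - 1) (by omega)).1
      omega
    have hu0 : ∀ m, j ≤ m → m + 1 < s → u m = 0 := by
      intro m
      induction m with
      | zero =>
        intro hjm h1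
        have : j = 0 := by omega
        rw [← this]; exact hQj (by omega)
      | succ n ih =>
        intro hjm h1
        rcases eq_or_lt_of_le hjm with h | h
        · rw [← h]; exact hQj (by omega)
        · by_contra hne
          have hun1 : u (n + 1) = 1 := (hub (n + 1) h1).resolve_left hne
          have hun : u n = 0 := ih (by omega) (by omega)
          have h1' : v (n + 1) ≤ u n * (x (n + 1 + 1) - x (n + 1)) := by
            have := hvub (n + 1) (by omega) (by omega)
            simpa using this
          have h2' : u (n + 1) * (x (n + 1 + 1) - x (n + 1)) ≤ v (n + 1) :=
            hlb (n + 1) h1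
          have hw : 0 < x (n + 1 + 1) - x (n + 1) := by
            have := hmono (n + 1) (by omega); linarith
          rw [hun, zero_mul] at h1'
          rw [hun1, one_mul] at h2'
          linarith
    have hvw : ∀ k < j, v k = x (k + 1) - x k := by
      intro k hk
      obtain ⟨h1, h2⟩ := hlt k hk
      have hge : x (k + 1) - x k ≤ v k := by
        have := hlb k h1; rwa [h2, one_mul] at this
      have hle : v k ≤ x (k + 1) - x k := by
        rcases Nat.eq_zero_or_pos k with h0 | h0
        · subst h0; exact hv0ub
        · have hcon := hvub k h0 (by omega)
          have hu1 : u (k - 1) = 1 := (hlt (k - 1) (by omega)).2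
          rwa [hu1, one_mul] at hcon
      linarith
    have hvz : ∀ k, j < k → k < s → v k = 0 := by
      intro k hk hks
      have h1 := hvub k (by omega) hks
      have h2 : u (k - 1) = 0 := hu0 (k - 1) (by omega) (by omega)
      rw [h2, zero_mul] at h1
      exact le_antisymm h1 (hv0 k hks)
    have hvj1 : 0 ≤ v j := hv0 j hjs
    have hvj2 : v j ≤ x (j + 1) - x j := by
      rcases Nat.eq_zero_or_pos j with h0 | h0
      · rw [h0]; simpa using hv0ub
      · have hcon := hvub j h0 hjs
        have hu1 : u (j - 1) = 1 := (hlt (j - 1) (by omega)).2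
        rwa [hu1, one_mul] at hcon
    set t := ∑ k ∈ range s, v k with ht
    have htval : t = x j + v j := by
      have hsplit : ∑ k ∈ range s, v k = ∑ k ∈ range (j + 1), v k := by
        symm
        apply Finset.sum_subset (Finset.range_subset_range.mpr (by omega))
        intro k hk hk'
        simp only [Finset.mem_range] at hk hk'
        exact hvz k (by omega) hk
      rw [ht, hsplit, Finset.sum_range_succ]
      have hT : ∑ k ∈ range j, v k = x j - x 0 := by
        rw [← Finset.sum_range_sub (fun k => x k) j]
        exact Finset.sum_congr rfl (fun k hk => hvw k (Finset.mem_range.mp hk))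
      rw [hT, hx0]; ring
    have hxj0 : 0 ≤ x j := by rw [← hx0]; exact hxle 0 j (by omega) (by omega)
    have hxj1X : x (j + 1) ≤ X := by rw [← hxs]; exact hxle (j + 1) s (by omega) le_rfl
    refine ⟨t, ⟨by linarith, by linarith⟩, ?_⟩
    have hclamp : ∀ k < s, min (x (k + 1)) (max t (x k)) - x k = v k := by
      intro k hks
      rcases lt_trichotomy k j with h | h | h
      · have hx1 : x (k + 1) ≤ x j := hxle (k + 1) j (by omega) (by omega)
        have hle : x (k + 1) ≤ t := by rw [htval]; linarith
        rw [hvw k h, min_eq_left (le_max_of_le_left hle)]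
      · rw [h]
        have h1 : x j ≤ t := by rw [htval]; linarith
        have h2 : t ≤ x (j + 1) := by rw [htval]; linarith
        rw [max_eq_left h1, min_eq_right h2, htval]; ring
      · have h2 : t ≤ x k := by
          have : x (j + 1) ≤ x k := hxle (j + 1) k (by omega) (by omega)
          rw [htval]; linarith
        rw [max_eq_right h2, min_eq_right (le_of_lt (hmono k hks)), hvz k h hks]
        ring
    have hp2' : p.2 = L t := by
      rw [hL, hp2]
      exact Finset.sum_congr rfl (fun k hk => by
        rw [hclamp k (Finset.mem_range.mp hk)])
    exact Prod.ext hp1 hp2'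
  · rintro ⟨t, ⟨ht0, htX⟩, hp⟩
    refine ⟨fun k => min (x (k + 1)) (max t (x k)) - x k,
      fun k => if x (k + 1) ≤ t then 1 else 0, ?_, ?_, ?_, ?_, ?_, ?_, ?_⟩
    · intro k hks
      have h1 : x k ≤ x (k + 1) := le_of_lt (hmono k hks)
      have h2 : x k ≤ min (x (k + 1)) (max t (x k)) := le_min h1 (le_max_right _ _)
      simp only []
      linarith
    · intro k h
      simp only []
      split <;> simp
    · intro k h
      simp only []
      split
      · rename_i hle
        have hmax : max t (x k) = t :=
          max_eq_left (le_trans (le_of_lt (hmono k (by omega))) hle)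
        rw [hmax, min_eq_left hle, one_mul]
      · have h1 : x k ≤ x (k + 1) := le_of_lt (hmono k (by omega))
        have h2 : x k ≤ min (x (k + 1)) (max t (x k)) := le_min h1 (le_max_right _ _)
        rw [zero_mul]
        linarith
    · simp only []
      have h1 : min (x (0 + 1)) (max t (x 0)) ≤ x (0 + 1) := min_le_left _ _
      norm_num at h1 ⊢
      try linarith
    · intro k hk0 hks
      simp only []
      rw [show k - 1 + 1 = k from by omega]
      split
      · rename_i hle
        rw [one_mul]
        have h1 : min (x (k + 1)) (max t (x k)) ≤ x (k + 1) := min_le_left _ _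
        linarith
      · rename_i hgt
        push_neg at hgt
        rw [zero_mul, max_eq_right (le_of_lt hgt),
          min_eq_right (le_of_lt (hmono k hks))]
        linarith
    · rw [hp]
      simp only []
      have key : ∀ k ∈ range s,
          min (x (k + 1)) (max t (x k)) - x k = min t (x (k + 1)) - min t (x k) := by
        intro k hk
        have hks := Finset.mem_range.mp hk
        rcases le_total t (x k) with h | h
        · rw [max_eq_right h, min_eq_right (le_of_lt (hmono k hks)),
            min_eq_left (le_trans h (le_of_lt (hmono k hks))), min_eq_left h]
          ring
        · rw [max_eq_left h, min_eq_right h, min_comm]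
      rw [Finset.sum_congr rfl key, Finset.sum_range_sub (fun k => min t (x k)) s,
        hx0, hxs, min_eq_left htX, min_eq_right ht0]
      ring
    · rw [hp, hL]
end
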